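/- One-step variance bounds for the PAGE estimator: In the finite-sum setting, fix x, x' ∈ ℝ^d and h_1,…,h_n ∈ ℝ^d with h = (1/n)∑_{i=1}^n h_i, and let p ∈ (0,1] and B ≥ 1. Let c be a Bernoulli random variable with P(c = 1) = p, and for each i let j_{i,1},…,j_{i,B} be i.i.d. uniform random elements of {1,…,m}, with c and all the j_{i,k} mutually independent. Define h_i' = ∇f_i(x') if c = 1, and h_i' = h_i + (1/B)∑_{k=1}^B (∇f_{i j_{i,k}}(x') − ∇f_{i j_{i,k}}(x)) if c = 0; set h' = (1/n)∑_{i=1}^n h_i'. Then: (1) E[‖h' − ∇f(x')‖²] ≤ ((1−p)L_max²/(nB))‖x' − x‖² + (1−p)‖h − ∇f(x)‖²; (2) for every i, E[‖h_i' − ∇f_i(x')‖²] ≤ ((1−p)L_max²/B)‖x' − x‖² + (1−p)‖h_i − ∇f_i(x)‖²; (3) for every i, E[‖h_i' − h_i‖²] ≤ ((1−p)L_max²/B + 2L_i²)‖x' − x‖² + 2p‖h_i − ∇f_i(x)‖². -/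

import Mathlib

open MeasureTheory ProbabilityTheory
open scoped ENNReal BigOperators

noncomputable section

/-!
Condition on the coin `c`. If `c = 1` every `h'ᵢ` is the exact gradient `∇fᵢ(x')`. If `c = 0`, a
weighted sum `∑ᵢ wᵢ (h'ᵢ - tᵢ)` is a deterministic vector plus `∑ᵢ wᵢ (B⁻¹ ∑ₖ Δᵢ(jᵢₖ) - Dᵢ)`, where
`Δᵢ(j) = ∇fᵢⱼ(x') - ∇fᵢⱼ(x)` and `Dᵢ = ∇fᵢ(x') - ∇fᵢ(x)` is its mean over `j`. This is a sum of
`nB` independent centred terms, so the cross terms vanish in expectation and its second moment is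
`B⁻¹ ∑ᵢ wᵢ² Var Δᵢ ≤ B⁻¹ ∑ᵢ wᵢ² Lmax² ‖x' - x‖²`. Bounds (1) and (2) take `w = 1/n` and `w = δᵢ`
with `tᵢ = ∇fᵢ(x')`; bound (3) takes `w = δᵢ`, `t = h`, and on the event `c = 1` uses
`‖∇fᵢ(x') - hᵢ‖² ≤ 2‖Dᵢ‖² + 2‖hᵢ - ∇fᵢ(x)‖²`.
-/

section UniformSampling

open Finset RealInnerProductSpace

variable {ι κ : Type*} [Fintype ι] [DecidableEq ι] [Fintype κ] [Nonempty κ]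

lemma expect_comp_eval {M : Type*} [AddCommMonoid M] [Module ℚ≥0 M] (F : κ → M) (i : ι) :
    𝔼 σ : ι → κ, F (σ i) = 𝔼 j, F j := by
  rw [Fintype.expect_equiv (Equiv.funSplitAt i κ) (fun σ => F (σ i)) (fun s => F s.1)
    fun _ => rfl, ← univ_product_univ, expect_product' univ univ fun j _ => F j]
  simp only [Fintype.expect_const]

lemma expect_comp_eval_eval {M : Type*} [AddCommMonoid M] [Module ℚ≥0 M] (F : κ → κ → M)
    {i i' : ι} (h : i' ≠ i) : 𝔼 σ : ι → κ, F (σ i) (σ i') = 𝔼 j, 𝔼 j', F j j' := by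
  rw [Fintype.expect_equiv (Equiv.funSplitAt i κ) (fun σ => F (σ i) (σ i'))
      (fun s => F s.1 (s.2 ⟨i', h⟩)) fun _ => by simp,
    ← univ_product_univ,
    expect_product' univ univ fun (j : κ) (τ : {j // j ≠ i} → κ) => F j (τ ⟨i', h⟩)]
  simp only [expect_comp_eval]

variable {E : Type*} [NormedAddCommGroup E] [InnerProductSpace ℝ E]

lemma expect_norm_add_sum_sq (a : E) (g : ι → κ → E) (hg : ∀ i, ∑ j, g i j = 0) :
    𝔼 σ : ι → κ, ‖a + ∑ i, g i (σ i)‖ ^ 2 = ‖a‖ ^ 2 + ∑ i, 𝔼 j, ‖g i j‖ ^ 2 := by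
  have hcentered (v : E) (i : ι) : 𝔼 j, ⟪v, g i j⟫ = 0 := by
    rw [Fintype.expect_eq_sum_div_card, ← inner_sum, hg, inner_zero_right, zero_div]
  have hexpand (σ : ι → κ) : ‖a + ∑ i, g i (σ i)‖ ^ 2 = ‖a‖ ^ 2
      + 2 * ∑ i, ⟪a, g i (σ i)⟫ + ∑ i, ∑ i', ⟪g i (σ i), g i' (σ i')⟫ := by
    simp_rw [norm_add_sq_real, inner_sum, ← real_inner_self_eq_norm_sq (∑ i, g i (σ i)),
      sum_inner, inner_sum]
  have hlinear (i : ι) : 𝔼 σ : ι → κ, ⟪a, g i (σ i)⟫ = 0 := by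
    rw [expect_comp_eval (fun j => ⟪a, g i j⟫), hcentered]
  -- distinct coordinates of a uniform `σ` are independent, so the cross terms vanish
  have hquadratic (i i' : ι) :
      𝔼 σ : ι → κ, ⟪g i (σ i), g i' (σ i')⟫ = if i' = i then 𝔼 j, ‖g i j‖ ^ 2 else 0 := by
    split_ifs with h
    · subst h
      simp_rw [expect_comp_eval (fun j => ⟪g i' j, g i' j⟫), real_inner_self_eq_norm_sq]
    · rw [expect_comp_eval_eval (fun j j' => ⟪g i j, g i' j'⟫) h]
      simp [hcentered]
  simp_rw [hexpand, expect_add_distrib, Fintype.expect_const, ← mul_expect, expect_sum_comm,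
    hlinear, hquadratic]
  simp

end UniformSampling

section IndependentSampling

open Finset

variable {Ω α ι κ : Type*} [MeasurableSpace Ω] {μ : Measure Ω} [MeasurableSpace α]
  [MeasurableSingletonClass α] [MeasurableSpace κ] [MeasurableSingletonClass κ] [Fintype ι]
  {c : Ω → α} {J : ι → Ω → κ}

lemma measure_preimage_eq_mul_prod_of_iIndep
    (hind : iIndep (fun o : Option ι => o.elim (MeasurableSpace.comap c inferInstance)
      fun i => MeasurableSpace.comap (J i) inferInstance) μ) (a : α) (σ : ι → κ) :
    μ ((fun ω => (c ω, fun i => J i ω)) ⁻¹' {(a, σ)})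
      = μ (c ⁻¹' {a}) * ∏ i, μ (J i ⁻¹' {σ i}) := by
  have hpre : (fun ω => (c ω, fun i => J i ω)) ⁻¹' {(a, σ)}
      = ⋂ o : Option ι, o.elim (c ⁻¹' {a}) fun i => J i ⁻¹' {σ i} := by
    ext ω
    simp [Prod.ext_iff, funext_iff, Option.forall]
  rw [hpre, hind.meas_iInter, Fintype.prod_option]
  · rfl
  rintro (_ | i)
  · exact ⟨_, measurableSet_singleton a, rfl⟩
  · exact ⟨_, measurableSet_singleton (σ i), rfl⟩

lemma integral_comp_eq_sum_expect [DecidableEq ι] [IsProbabilityMeasure μ] [Fintype α]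
    [Fintype κ] (hc : Measurable c) (hJ : ∀ i, Measurable (J i))
    (hunif : ∀ i j, μ (J i ⁻¹' {j}) = (Fintype.card κ : ℝ≥0∞)⁻¹)
    (hind : iIndep (fun o : Option ι => o.elim (MeasurableSpace.comap c inferInstance)
      fun i => MeasurableSpace.comap (J i) inferInstance) μ) (G : α → (ι → κ) → ℝ) :
    ∫ ω, G (c ω) (fun i => J i ω) ∂μ = ∑ a, μ.real (c ⁻¹' {a}) * 𝔼 σ, G a σ := by
  set T : Ω → α × (ι → κ) := fun ω => (c ω, fun i => J i ω)
  have hT : Measurable T := hc.prodMk (measurable_pi_lambda _ hJ)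
  have hweight (s : α × (ι → κ)) :
      (μ.map T).real {s} = μ.real (c ⁻¹' {s.1}) * (Fintype.card (ι → κ) : ℝ)⁻¹ := by
    rw [map_measureReal_apply hT (measurableSet_singleton s), measureReal_def,
      measure_preimage_eq_mul_prod_of_iIndep hind s.1 s.2]
    simp [hunif, ENNReal.toReal_mul, measureReal_def]
  calc ∫ ω, G (c ω) (fun i => J i ω) ∂μ = ∫ s, Function.uncurry G s ∂μ.map T :=
        (integral_map (f := Function.uncurry G) hT.aemeasurable
          Measurable.of_discrete.aestronglyMeasurable).symm
    _ = _ := by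
      simp only [integral_fintype Integrable.of_finite, hweight, Fintype.sum_prod_type,
        Fintype.expect_eq_sum_div_card, smul_eq_mul, Function.uncurry_apply_pair, div_eq_mul_inv,
        sum_mul, mul_sum, mul_right_comm, mul_assoc]

end IndependentSampling

section Minibatch

open Finset

variable {E : Type*} [NormedAddCommGroup E] [InnerProductSpace ℝ E] {κ : Type*} [Fintype κ]

lemma expect_norm_sub_mean_sq_le (Δ : κ → E) (D : E)
    (hD : ∑ j, Δ j = (Fintype.card κ : ℝ) • D) : 𝔼 j, ‖Δ j - D‖ ^ 2 ≤ 𝔼 j, ‖Δ j‖ ^ 2 := by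
  simp_rw [Fintype.expect_eq_sum_div_card, norm_sub_sq_real, sum_add_distrib, sum_sub_distrib,
    ← mul_sum, ← sum_inner, hD, real_inner_smul_left, real_inner_self_eq_norm_sq, sum_const,
    card_univ, nsmul_eq_mul]
  gcongr
  nlinarith [sq_nonneg ‖D‖, (Nat.cast_nonneg _ : (0 : ℝ) ≤ Fintype.card κ)]

variable {ι β : Type*} [Fintype ι] [DecidableEq ι] [Fintype β] [DecidableEq β] [Nonempty β]
  [Nonempty κ]

lemma expect_norm_add_minibatch_sq (a : E) (w : ι → ℝ) (Δ : ι → κ → E) (D : ι → E)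
    (hD : ∀ i, ∑ j, Δ i j = (Fintype.card κ : ℝ) • D i) :
    𝔼 σ : ι × β → κ, ‖a + ∑ i, w i • ((Fintype.card β : ℝ)⁻¹ • ∑ k, Δ i (σ (i, k)) - D i)‖ ^ 2
      = ‖a‖ ^ 2 + (Fintype.card β : ℝ)⁻¹ * ∑ i, w i ^ 2 * 𝔼 j, ‖Δ i j - D i‖ ^ 2 := by
  have hB : (Fintype.card β : ℝ) ≠ 0 := by positivity
  set g : ι × β → κ → E := fun ik j => ((Fintype.card β : ℝ)⁻¹ * w ik.1) • (Δ ik.1 j - D ik.1)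
  have hg : ∀ ik, ∑ j, g ik j = 0 := fun ik => by
    simp [g, ← smul_sum, sum_sub_distrib, hD, Nat.cast_smul_eq_nsmul]
  have hsum (σ : ι × β → κ) : ∑ ik, g ik (σ ik)
      = ∑ i, w i • ((Fintype.card β : ℝ)⁻¹ • ∑ k, Δ i (σ (i, k)) - D i) := by
    simp only [g, Fintype.sum_prod_type, ← smul_sum, sum_sub_distrib, sum_const, card_univ,
      ← Nat.cast_smul_eq_nsmul ℝ]
    refine sum_congr rfl fun i _ => ?_
    match_scalars <;> field_simp
  have hsplit := expect_norm_add_sum_sq a g hg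
  simp_rw [hsum] at hsplit
  rw [hsplit, Fintype.sum_prod_type]
  simp only [g, norm_smul, mul_pow, ← mul_expect, sum_const, card_univ, nsmul_eq_mul, mul_sum,
    Real.norm_eq_abs, sq_abs]
  refine congrArg _ (sum_congr rfl fun i _ => ?_)
  field_simp

variable {Ω : Type*} [MeasurableSpace Ω] {μ : Measure Ω} [IsProbabilityMeasure μ]
  [MeasurableSpace κ] [MeasurableSingletonClass κ]

theorem integral_norm_sq_page_le {c : Ω → Bool} (hc : Measurable c) {p : ℝ}
    (hp : μ (c ⁻¹' {true}) = ENNReal.ofReal p) (hp0 : 0 ≤ p) (hp1 : p ≤ 1)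
    {J : ι → β → Ω → κ} (hJ : ∀ i k, Measurable (J i k))
    (hunif : ∀ i k j, μ (J i k ⁻¹' {j}) = (Fintype.card κ : ℝ≥0∞)⁻¹)
    (hind : iIndep (fun o : Option (ι × β) => o.elim (MeasurableSpace.comap c inferInstance)
      fun ik => MeasurableSpace.comap (J ik.1 ik.2) inferInstance) μ)
    {Δ : ι → κ → E} {D : ι → E} (hD : ∀ i, ∑ j, Δ i j = (Fintype.card κ : ℝ) • D i)
    {V : ℝ} (hV : ∀ i j, ‖Δ i j‖ ^ 2 ≤ V) {G h : ι → E} {h' : ι → Ω → E}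
    (hh' : ∀ i ω, h' i ω =
      if c ω = true then G i else h i + (Fintype.card β : ℝ)⁻¹ • ∑ k, Δ i (J i k ω))
    (t : ι → E) (w : ι → ℝ) :
    ∫ ω, ‖∑ i, w i • (h' i ω - t i)‖ ^ 2 ∂μ
      ≤ p * ‖∑ i, w i • (G i - t i)‖ ^ 2
        + (1 - p) * (‖∑ i, w i • (h i + D i - t i)‖ ^ 2 + (∑ i, w i ^ 2) * V / Fintype.card β) := by
  have hp_true : μ.real (c ⁻¹' {true}) = p := by
    rw [measureReal_def, hp, ENNReal.toReal_ofReal hp0]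
  have hp_false : μ.real (c ⁻¹' {false}) = 1 - p := by
    rw [← hp_true, ← probReal_compl_eq_one_sub (hc (measurableSet_singleton true))]
    congr
    ext
    simp
  have hvariance : (Fintype.card β : ℝ)⁻¹ * ∑ i, w i ^ 2 * 𝔼 j, ‖Δ i j - D i‖ ^ 2
      ≤ (∑ i, w i ^ 2) * V / Fintype.card β := by
    rw [sum_mul, div_eq_inv_mul]
    gcongr with i
    exact (expect_norm_sub_mean_sq_le _ _ (hD i)).trans
      (expect_le univ_nonempty fun j _ => hV i j)
  set X : Bool → (ι × β → κ) → E := fun b σ => if b = true then ∑ i, w i • (G i - t i)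
    else ∑ i, w i • (h i + D i - t i)
      + ∑ i, w i • ((Fintype.card β : ℝ)⁻¹ • ∑ k, Δ i (σ (i, k)) - D i)
  have hX (ω : Ω) : ∑ i, w i • (h' i ω - t i) = X (c ω) fun ik => J ik.1 ik.2 ω := by
    simp only [X, hh']
    split_ifs
    · rfl
    · rw [← sum_add_distrib]
      congr with i
      module
  simp_rw [hX]
  rw [integral_comp_eq_sum_expect hc (fun ik => hJ ik.1 ik.2) (fun ik => hunif ik.1 ik.2) hind
    fun b σ => ‖X b σ‖ ^ 2]
  simp only [X, Fintype.sum_bool, if_true, Bool.false_eq_true, if_false, Fintype.expect_const,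
    expect_norm_add_minibatch_sq _ _ _ _ hD, hp_true, hp_false]
  gcongr

end Minibatch

lemma norm_sub_sq_le {E : Type*} [NormedAddCommGroup E] [InnerProductSpace ℝ E] (u v : E) :
    ‖u - v‖ ^ 2 ≤ 2 * ‖u‖ ^ 2 + 2 * ‖v‖ ^ 2 := by
  nlinarith [parallelogram_law_with_norm ℝ u v, sq_nonneg ‖u + v‖]

section Gradient

variable {F : Type*} [NormedAddCommGroup F] [InnerProductSpace ℝ F] [CompleteSpace F]
  {τ : Type*} [Fintype τ] {g : τ → F → ℝ}

lemma gradient_eq_smul_sum {f : F → ℝ} (hg : ∀ t, Differentiable ℝ (g t)) {a : ℝ}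
    (hf : ∀ z, f z = a * ∑ t, g t z) (z : F) : gradient f z = a • ∑ t, gradient (g t) z := by
  simp only [funext hf, gradient, fderiv_const_mul (DifferentiableAt.fun_sum fun t _ => hg t z),
    fderiv_fun_sum fun t _ => hg t z, map_smul, map_sum]

end Gradient

theorem page_one_step_variance_bounds
    (d n m B : ℕ) (hn : 1 ≤ n) (hm : 1 ≤ m) (hB : 1 ≤ B)
    (fij : Fin n → Fin m → EuclideanSpace ℝ (Fin d) → ℝ)
    (fi : Fin n → EuclideanSpace ℝ (Fin d) → ℝ)
    (hfidef : ∀ i z, fi i z = (m : ℝ)⁻¹ * ∑ j, fij i j z)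
    (f : EuclideanSpace ℝ (Fin d) → ℝ)
    (hfdef : ∀ z, f z = (n : ℝ)⁻¹ * ∑ i, fi i z)
    (hdiffij : ∀ i j, Differentiable ℝ (fij i j))
    (Li : Fin n → ℝ)
    (hLi : ∀ i x y, ‖gradient (fi i) x - gradient (fi i) y‖ ≤ Li i * ‖x - y‖)
    (Lij : Fin n → Fin m → ℝ)
    (hLij : ∀ i j x y,
      ‖gradient (fij i j) x - gradient (fij i j) y‖ ≤ Lij i j * ‖x - y‖)
    (Lmax : ℝ) (hLmax : ∀ i j, Lij i j ≤ Lmax)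
    {Ω : Type*} [MeasurableSpace Ω] (μ : Measure Ω) [IsProbabilityMeasure μ]
    (p : ℝ) (hp0 : 0 < p) (hp1 : p ≤ 1)
    (c : Ω → Bool) (hcmeas : Measurable c)
    (hclaw : μ {ω | c ω = true} = ENNReal.ofReal p)
    (J : Fin n → Fin B → Ω → Fin m)
    (hJmeas : ∀ i k, Measurable (J i k))
    (hJlaw : ∀ i k (jv : Fin m), μ {ω | J i k ω = jv} = (m : ℝ≥0∞)⁻¹)
    (hindep : iIndep (fun o : Option (Fin n × Fin B) =>
      match o with
      | none => MeasurableSpace.comap c inferInstance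
      | some (i, k) => MeasurableSpace.comap (J i k) inferInstance) μ)
    (x x' : EuclideanSpace ℝ (Fin d))
    (h : Fin n → EuclideanSpace ℝ (Fin d))
    (h' : Fin n → Ω → EuclideanSpace ℝ (Fin d))
    (hh' : ∀ i ω, h' i ω =
      if c ω = true then gradient (fi i) x'
      else h i + (B : ℝ)⁻¹ • ∑ k : Fin B,
        (gradient (fij i (J i k ω)) x' - gradient (fij i (J i k ω)) x)) :
    ((∫ ω, ‖(n : ℝ)⁻¹ • ∑ i, h' i ω - gradient f x'‖ ^ 2 ∂μ)
      ≤ (1 - p) * Lmax ^ 2 / (n * B) * ‖x' - x‖ ^ 2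
        + (1 - p) * ‖(n : ℝ)⁻¹ • ∑ i, h i - gradient f x‖ ^ 2) ∧
    (∀ i, (∫ ω, ‖h' i ω - gradient (fi i) x'‖ ^ 2 ∂μ)
      ≤ (1 - p) * Lmax ^ 2 / B * ‖x' - x‖ ^ 2
        + (1 - p) * ‖h i - gradient (fi i) x‖ ^ 2) ∧
    (∀ i, (∫ ω, ‖h' i ω - h i‖ ^ 2 ∂μ)
      ≤ ((1 - p) * Lmax ^ 2 / B + 2 * Li i ^ 2) * ‖x' - x‖ ^ 2
        + 2 * p * ‖h i - gradient (fi i) x‖ ^ 2) := by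
  have : NeZero m := ⟨by omega⟩
  have : NeZero B := ⟨by omega⟩
  have hdiff_fi (i : Fin n) : Differentiable ℝ (fi i) := by
    have := hdiffij i
    rw [funext (hfidef i)]
    fun_prop
  have hgrad_fi (i : Fin n) := gradient_eq_smul_sum (hdiffij i) (hfidef i)
  have hgrad_f := gradient_eq_smul_sum hdiff_fi hfdef
  set Δ : Fin n → Fin m → EuclideanSpace ℝ (Fin d) :=
    fun i j => gradient (fij i j) x' - gradient (fij i j) x
  set D : Fin n → EuclideanSpace ℝ (Fin d) := fun i => gradient (fi i) x' - gradient (fi i) x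
  have hD (i : Fin n) : ∑ j, Δ i j = (Fintype.card (Fin m) : ℝ) • D i := by
    simp [Δ, D, hgrad_fi, Finset.sum_sub_distrib, smul_sub, smul_smul]
  have hV (i : Fin n) (j : Fin m) : ‖Δ i j‖ ^ 2 ≤ Lmax ^ 2 * ‖x' - x‖ ^ 2 := by
    rw [← mul_pow]
    exact pow_le_pow_left₀ (norm_nonneg _) ((hLij i j x' x).trans (by gcongr; exact hLmax i j)) 2
  have key := integral_norm_sq_page_le hcmeas hclaw hp0.le hp1 hJmeas
    (fun i k j => by rw [Fintype.card_fin]; exact hJlaw i k j)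
    (by convert hindep using 2 with o; rcases o with _ | ⟨i, k⟩ <;> rfl) hD hV
    (G := fun i => gradient (fi i) x') (h := h) (h' := h') fun i ω => by rw [hh', Fintype.card_fin]
  simp only [Fintype.card_fin] at key
  have hD_cancel (i : Fin n) : h i + D i - gradient (fi i) x' = h i - gradient (fi i) x := by
    simp only [D]
    abel
  refine ⟨?_, fun i => ?_, fun i => ?_⟩
  · have hmean (v : Fin n → EuclideanSpace ℝ (Fin d)) (z) : (n : ℝ)⁻¹ • ∑ i, v i - gradient f z
        = ∑ i, (n : ℝ)⁻¹ • (v i - gradient (fi i) z) := by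
      rw [hgrad_f, ← smul_sub, ← Finset.sum_sub_distrib, Finset.smul_sum]
    have hn0 : (n : ℝ) ≠ 0 := Nat.cast_ne_zero.2 (by omega)
    simp_rw [hmean]
    calc _ ≤ (1 - p) * (‖∑ i, (n : ℝ)⁻¹ • (h i - gradient (fi i) x)‖ ^ 2
          + n * ((n : ℝ)⁻¹) ^ 2 * (Lmax ^ 2 * ‖x' - x‖ ^ 2) / B) := by
          simpa [hD_cancel] using key (fun i => gradient (fi i) x') fun _ => (n : ℝ)⁻¹
      _ = _ := by
          field_simp
          ring
  · calc _ ≤ (1 - p) * (‖h i - gradient (fi i) x‖ ^ 2 + Lmax ^ 2 * ‖x' - x‖ ^ 2 / B) := by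
          simpa [hD_cancel, Pi.single_apply] using key (fun i => gradient (fi i) x') (Pi.single i 1)
      _ = _ := by ring
  · have hDi : ‖D i‖ ^ 2 ≤ Li i ^ 2 * ‖x' - x‖ ^ 2 := by
      simpa [mul_pow] using pow_le_pow_left₀ (norm_nonneg _) (hLi i x' x) 2
    have hrestart := norm_sub_sq_le (D i) (h i - gradient (fi i) x)
    rw [show D i - (h i - gradient (fi i) x) = gradient (fi i) x' - h i by simp only [D]; abel]
      at hrestart
    calc _ ≤ p * ‖gradient (fi i) x' - h i‖ ^ 2
          + (1 - p) * (‖D i‖ ^ 2 + Lmax ^ 2 * ‖x' - x‖ ^ 2 / B) := by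
          simpa [Pi.single_apply] using key h (Pi.single i 1)
      _ ≤ _ := by
          linear_combination p * hrestart + mul_nonneg (sub_nonneg.2 hp1) (sq_nonneg ‖D i‖)
            + 2 * hDi
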